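/- arXiv:math-ph/0607017 — 2 statements merged into one kernel-verified Lean document; each statement's English description precedes it below -/
import Mathlib

section
/- For every k ≥ 1, the (N+k)-th Fourier coefficient of e^t satisfies |(e^t)_{N+k}| ≤ (1/√(k(N+k))) · ( F_t · (e^{F_t} − 1) )_{N+k}. -/
open Filter Complex MeasureTheory Topology

open scoped Nat

noncomputable def fc (h : ℝ → ℂ) (m : ℤ) : ℂ :=
  (1 / (2 * Real.pi) : ℂ) * ∫ θ in (-Real.pi)..Real.pi, h θ * Complex.exp (-Complex.I * m * θ)

/-- `t(z) = ∑_{j=1}^N t_j z^j / √j` as a function of the angle `θ`. -/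
noncomputable def tpoly (N : ℕ) (t : ℕ → ℂ) (θ : ℝ) : ℂ :=
  ∑ j ∈ Finset.Icc 1 N, t j * Complex.exp (Complex.I * (j : ℂ) * (θ : ℂ)) / (Real.sqrt j : ℂ)

/-- `F_t(z) = ∑_{j=1}^N |t_j| z^j` as a function of the angle `θ`. -/
noncomputable def Fpoly (N : ℕ) (t : ℕ → ℂ) (θ : ℝ) : ℂ :=
  ∑ j ∈ Finset.Icc 1 N, (‖t j‖ : ℂ) * Complex.exp (Complex.I * (j : ℂ) * (θ : ℂ))

lemma cont_e (m : ℤ) : Continuous fun θ : ℝ => Complex.exp (-Complex.I * m * θ) := by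
  fun_prop

lemma norm_e (m : ℤ) (θ : ℝ) : ‖Complex.exp (-Complex.I * m * θ)‖ = 1 := by
  rw [Complex.norm_exp]; simp

lemma fc_ee (n m : ℤ) :
    fc (fun θ => Complex.exp (Complex.I * n * θ)) m = if n = m then 1 else 0 := by
  unfold fc
  have hint : ∀ θ : ℝ, Complex.exp (Complex.I * n * θ) * Complex.exp (-Complex.I * m * θ)
      = Complex.exp ((Complex.I * (n - m)) * θ) := by
    intro θ
    rw [← Complex.exp_add]
    ring_nf
  simp only [hint]
  by_cases h : n = m
  · subst h
    simp only [sub_self, mul_zero, zero_mul, Complex.exp_zero, if_pos rfl]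
    rw [intervalIntegral.integral_const]
    have hpi : (Real.pi : ℂ) ≠ 0 := by exact_mod_cast Real.pi_ne_zero
    push_cast
    field_simp
    simp [Complex.real_smul]
    ring
  · rw [if_neg h]
    have hc : Complex.I * ((n : ℂ) - m) ≠ 0 := by
      apply mul_ne_zero Complex.I_ne_zero
      intro hh
      apply h
      have : ((n : ℂ)) = m := by linear_combination hh
      exact_mod_cast this
    rw [integral_exp_mul_complex hc]
    have : Complex.exp (Complex.I * ((n:ℂ) - m) * (Real.pi : ℂ)) =
        Complex.exp (Complex.I * ((n:ℂ) - m) * ((-Real.pi : ℝ) : ℂ)) := by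
      rw [← mul_one (Complex.exp (Complex.I * ((n:ℂ) - m) * ((-Real.pi : ℝ) : ℂ))),
        ← Complex.exp_int_mul_two_pi_mul_I (n - m), ← Complex.exp_add]
      congr 1
      push_cast
      ring
    rw [this, sub_self, zero_div, mul_zero]

lemma fc_const_mul (z : ℂ) (g : ℝ → ℂ) (m : ℤ) :
    fc (fun θ => z * g θ) m = z * fc g m := by
  unfold fc
  simp only [mul_assoc, intervalIntegral.integral_const_mul]
  ring

lemma fc_sum {α : Type*} (s : Finset α) (g : α → ℝ → ℂ) (hg : ∀ a ∈ s, Continuous (g a))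
    (m : ℤ) : fc (fun θ => ∑ a ∈ s, g a θ) m = ∑ a ∈ s, fc (g a) m := by
  unfold fc
  rw [← Finset.mul_sum]
  congr 1
  rw [← intervalIntegral.integral_finset_sum]
  · congr 1; ext θ; rw [Finset.sum_mul]
  · intro a ha
    exact ((hg a ha).mul (cont_e m)).intervalIntegrable _ _

lemma pow_expand (N n : ℕ) (c : ℕ → ℂ) (θ : ℝ) :
    (∑ j ∈ Finset.Icc 1 N, c j * Complex.exp (Complex.I * (j : ℂ) * (θ : ℂ))) ^ n =
    ∑ f ∈ Fintype.piFinset (fun _ : Fin n => Finset.Icc 1 N),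
      (∏ i, c (f i)) * Complex.exp (Complex.I * ((∑ i, f i : ℕ) : ℂ) * (θ : ℂ)) := by
  rw [← Fin.prod_const n, Finset.prod_univ_sum]
  apply Finset.sum_congr rfl
  intro f _
  rw [Finset.prod_mul_distrib]
  congr 1
  rw [← Complex.exp_sum]
  congr 1
  push_cast
  rw [Finset.mul_sum, Finset.sum_mul]

lemma fc_pow (N n M : ℕ) (c : ℕ → ℂ) :
    fc (fun θ => (∑ j ∈ Finset.Icc 1 N, c j * Complex.exp (Complex.I * (j : ℂ) * (θ : ℂ))) ^ n)
        (M : ℤ) =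
    ∑ f ∈ (Fintype.piFinset (fun _ : Fin n => Finset.Icc 1 N)).filter
        (fun f => ∑ i, f i = M), ∏ i, c (f i) := by
  have h1 : (fun θ : ℝ =>
      (∑ j ∈ Finset.Icc 1 N, c j * Complex.exp (Complex.I * (j : ℂ) * (θ : ℂ))) ^ n) =
      fun θ : ℝ => ∑ f ∈ Fintype.piFinset (fun _ : Fin n => Finset.Icc 1 N),
        (∏ i, c (f i)) * Complex.exp (Complex.I * ((∑ i, f i : ℕ) : ℂ) * (θ : ℂ)) := by
    funext θ; exact pow_expand N n c θ
  rw [h1, fc_sum _ _ (by intro a _; fun_prop)]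
  rw [Finset.sum_filter]
  apply Finset.sum_congr rfl
  intro f _
  have h2 : (fun θ : ℝ => (∏ i, c (f i)) *
      Complex.exp (Complex.I * ((∑ i, f i : ℕ) : ℂ) * (θ : ℂ))) =
      fun θ : ℝ => (∏ i, c (f i)) *
      Complex.exp (Complex.I * (((∑ i, f i : ℕ) : ℤ) : ℂ) * (θ : ℂ)) := by
    push_cast; rfl
  rw [h2, fc_const_mul, fc_ee]
  by_cases h : ∑ i, f i = M
  · simp [h]
  · rw [if_neg (by exact_mod_cast h), if_neg h, mul_zero]

lemma fc_hasSum (g : ℕ → ℝ → ℂ) (G : ℝ → ℂ) (hcont : ∀ n, Continuous (g n)) (C : ℕ → ℝ)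
    (hb : ∀ n θ, ‖g n θ‖ ≤ C n) (hC : Summable C)
    (hlim : ∀ θ, HasSum (fun n => g n θ) (G θ)) (m : ℤ) :
    HasSum (fun n => fc (g n) m) (fc G m) := by
  unfold fc
  apply HasSum.mul_left
  apply intervalIntegral.hasSum_integral_of_dominated_convergence (fun n _ => C n)
  · intro n
    exact (((hcont n).mul (by fun_prop)).aestronglyMeasurable)
  · intro n
    filter_upwards with θ _
    rw [norm_mul, norm_e, mul_one]
    exact hb n θ
  · filter_upwards with θ _
    exact hC
  · exact intervalIntegrable_const
  · filter_upwards with θ _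
    exact (hlim θ).mul_right _

lemma key_nat {n N K : ℕ} (hK : 1 ≤ K) (f : Fin n → ℕ) (h1 : ∀ i, 1 ≤ f i)
    (hN : ∀ i, f i ≤ N) (hs : ∑ i, f i = N + K) :
    K * (N + K) ≤ n ^ 2 * ∏ i, f i := by
  have hn2 : 2 ≤ n := by
    rcases n with _ | _ | n
    · simp at hs; omega
    · rw [Fin.sum_univ_one] at hs
      have := hN 0; omega
    · omega
  obtain ⟨i₀, -, hi₀⟩ := Finset.exists_max_image Finset.univ f
    ⟨⟨0, by omega⟩, Finset.mem_univ _⟩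
  have hMle : N + K ≤ n * f i₀ := by
    calc N + K = ∑ i, f i := hs.symm
    _ ≤ Finset.univ.card • f i₀ :=
        Finset.sum_le_card_nsmul _ _ _ (fun i _ => hi₀ i (Finset.mem_univ i))
    _ = n * f i₀ := by simp [mul_comm]
  set s := Finset.univ.erase i₀ with hsdef
  have hcard : s.card = n - 1 := by
    rw [hsdef, Finset.card_erase_of_mem (Finset.mem_univ _), Finset.card_univ, Fintype.card_fin]
  have hsplit : f i₀ * ∏ i ∈ s, f i = ∏ i, f i := Finset.mul_prod_erase _ _ (Finset.mem_univ _)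
  have hsumsplit : f i₀ + ∑ i ∈ s, f i = ∑ i, f i := Finset.add_sum_erase _ _ (Finset.mem_univ _)
  have hKle : K ≤ ∑ i ∈ s, f i := by
    have := hN i₀; omega
  have hne : s.Nonempty := Finset.card_pos.mp (by omega)
  obtain ⟨j, hj, hjmax⟩ := Finset.exists_max_image s f hne
  have h2 : ∑ i ∈ s, f i ≤ (n - 1) * f j := by
    calc ∑ i ∈ s, f i ≤ s.card • f j := Finset.sum_le_card_nsmul _ _ _ hjmax
    _ = (n - 1) * f j := by rw [hcard, smul_eq_mul]
  have h3 : f j ≤ ∏ i ∈ s, f i := Finset.single_le_prod' (fun i _ => h1 i) hj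
  have h4 : K ≤ n * ∏ i ∈ s, f i := by
    calc K ≤ (n - 1) * f j := le_trans hKle h2
    _ ≤ n * ∏ i ∈ s, f i := Nat.mul_le_mul (by omega) h3
  calc K * (N + K) ≤ (n * ∏ i ∈ s, f i) * (n * f i₀) := Nat.mul_le_mul h4 hMle
  _ = n ^ 2 * ∏ i, f i := by rw [← hsplit]; ring

lemma exp_hasSum (x : ℂ) : HasSum (fun n : ℕ => x ^ n / (n ! : ℂ)) (Complex.exp x) := by
  rw [Complex.exp_eq_exp_ℂ]
  exact NormedSpace.expSeries_div_hasSum_exp x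

lemma sqrt_prod {n : ℕ} (f : Fin n → ℕ) (s : Finset (Fin n)) :
    ∏ i ∈ s, Real.sqrt (f i) = Real.sqrt (∏ i ∈ s, (f i : ℝ)) := by
  induction s using Finset.cons_induction with
  | empty => simp
  | cons i s hi ih =>
    rw [Finset.prod_cons, Finset.prod_cons, ih, ← Real.sqrt_mul (by positivity)]

theorem stmt7 (N : ℕ) (t : ℕ → ℂ) :
    ∀ kk : ℕ, 1 ≤ kk →
      ‖fc (fun θ => Complex.exp (tpoly N t θ)) ((N : ℤ) + kk)‖ ≤
        (1 / Real.sqrt (kk * (N + kk))) *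
          (fc (fun θ => Fpoly N t θ * (Complex.exp (Fpoly N t θ) - 1)) ((N : ℤ) + kk)).re := by
  intro kk hkk
  set M := N + kk with hM
  have hm : (N : ℤ) + kk = (M : ℤ) := by push_cast [hM]; ring
  rw [hm]
  set a : ℕ → ℂ := fun j => t j / (Real.sqrt j : ℂ) with ha
  set V : (n : ℕ) → Finset (Fin n → ℕ) := fun n =>
    (Fintype.piFinset (fun _ : Fin n => Finset.Icc 1 N)).filter (fun f => ∑ i, f i = M)
    with hV
  set S : ℕ → ℝ := fun n => ∑ f ∈ V n, ∏ i, ‖t (f i)‖ with hS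
  set W : ℕ → ℝ := fun n => ∑ f ∈ V n, ∏ i, (‖t (f i)‖ / Real.sqrt (f i)) with hW
  set R : ℝ := ∑ j ∈ Finset.Icc 1 N, ‖t j‖ with hR
  set Q : ℝ := Real.sqrt ((kk : ℝ) * ((N : ℝ) + (kk : ℝ))) with hQ
  have hR0 : 0 ≤ R := Finset.sum_nonneg fun j _ => norm_nonneg _
  have hQpos : 0 < Q := by
    rw [hQ]
    apply Real.sqrt_pos.mpr
    have h1 : (1 : ℝ) ≤ (kk : ℝ) := by exact_mod_cast hkk
    positivity
  -- membership facts
  have hmemV : ∀ (n : ℕ) (f : Fin n → ℕ), f ∈ V n →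
      (∀ i, 1 ≤ f i ∧ f i ≤ N) ∧ ∑ i, f i = M := by
    intro n f hf
    rw [hV, Finset.mem_filter, Fintype.mem_piFinset] at hf
    refine ⟨fun i => ?_, hf.2⟩
    have := hf.1 i
    rw [Finset.mem_Icc] at this
    exact this
  -- tpoly rewritten
  have hTsum : ∀ θ : ℝ, tpoly N t θ =
      ∑ j ∈ Finset.Icc 1 N, a j * Complex.exp (Complex.I * (j : ℂ) * (θ : ℂ)) := by
    intro θ
    unfold tpoly
    exact Finset.sum_congr rfl fun j _ => (mul_div_right_comm _ _ _)
  have hTcont : Continuous (tpoly N t) := by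
    unfold tpoly
    apply continuous_finset_sum
    intro j _
    fun_prop
  have hFcont : Continuous (Fpoly N t) := by
    unfold Fpoly
    apply continuous_finset_sum
    intro j _
    fun_prop
  have hTb : ∀ θ, ‖tpoly N t θ‖ ≤ R := by
    intro θ
    rw [hTsum θ]
    refine le_trans (norm_sum_le _ _) (Finset.sum_le_sum fun j hj => ?_)
    rw [norm_mul]
    have he : ‖Complex.exp (Complex.I * (j : ℂ) * (θ : ℂ))‖ = 1 := by
      rw [Complex.norm_exp]
      simp
    rw [he, mul_one, ha]
    have hj1 : 1 ≤ j := (Finset.mem_Icc.mp hj).1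
    have hsj : (1:ℝ) ≤ Real.sqrt j := by
      rw [show (1:ℝ) = Real.sqrt 1 by simp]
      apply Real.sqrt_le_sqrt
      exact_mod_cast hj1
    rw [norm_div, Complex.norm_real, Real.norm_eq_abs, _root_.abs_of_nonneg (Real.sqrt_nonneg _)]
    exact div_le_self (norm_nonneg _) hsj
  have hFb : ∀ θ, ‖Fpoly N t θ‖ ≤ R := by
    intro θ
    unfold Fpoly
    refine le_trans (norm_sum_le _ _) (Finset.sum_le_sum fun j hj => ?_)
    rw [norm_mul]
    have he : ‖Complex.exp (Complex.I * (j : ℂ) * (θ : ℂ))‖ = 1 := by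
      rw [Complex.norm_exp]
      simp
    rw [he, mul_one, Complex.norm_real, Real.norm_eq_abs, _root_.abs_of_nonneg (norm_nonneg _)]
  -- basic positivity
  have hS0 : ∀ n, 0 ≤ S n := by
    intro n
    apply Finset.sum_nonneg
    intro f _
    exact Finset.prod_nonneg fun i _ => norm_nonneg _
  have hW0 : ∀ n, 0 ≤ W n := by
    intro n
    apply Finset.sum_nonneg
    intro f _
    exact Finset.prod_nonneg fun i _ => div_nonneg (norm_nonneg _) (Real.sqrt_nonneg _)
  have hWS : ∀ n, W n ≤ S n := by
    intro n
    apply Finset.sum_le_sum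
    intro f hf
    apply Finset.prod_le_prod (fun i _ => div_nonneg (norm_nonneg _) (Real.sqrt_nonneg _))
    intro i _
    have h1 : 1 ≤ f i := ((hmemV n f hf).1 i).1
    have : (1:ℝ) ≤ Real.sqrt (f i) := by
      rw [show (1:ℝ) = Real.sqrt 1 by simp]
      apply Real.sqrt_le_sqrt
      exact_mod_cast h1
    exact div_le_self (norm_nonneg _) this
  have hSR : ∀ n, S n ≤ R ^ n := by
    intro n
    rw [hS]
    have : R ^ n = ∑ f ∈ Fintype.piFinset (fun _ : Fin n => Finset.Icc 1 N),
        ∏ i, ‖t (f i)‖ := by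
      rw [← Fin.prod_const n R, hR, Finset.prod_univ_sum]
    rw [this]
    apply Finset.sum_le_sum_of_subset_of_nonneg (Finset.filter_subset _ _)
    intro f _ _
    exact Finset.prod_nonneg fun i _ => norm_nonneg _
  -- the key per-term bound
  have hWn : ∀ n : ℕ, W n ≤ ((n : ℝ) / Q) * S n := by
    intro n
    rw [hW, hS, Finset.mul_sum]
    apply Finset.sum_le_sum
    intro f hf
    obtain ⟨hbounds, hsum⟩ := hmemV n f hf
    have hkey : kk * M ≤ n ^ 2 * ∏ i, f i :=
      key_nat hkk f (fun i => (hbounds i).1) (fun i => (hbounds i).2) (by rw [hsum, hM])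
    have hQle : Q ≤ (n : ℝ) * ∏ i, Real.sqrt (f i) := by
      have hcast : (kk : ℝ) * ((N : ℝ) + (kk : ℝ)) = ((kk * M : ℕ) : ℝ) := by
        push_cast [hM]; ring
      rw [hQ, hcast, sqrt_prod]
      calc Real.sqrt ((kk * M : ℕ) : ℝ) ≤ Real.sqrt ((n ^ 2 * ∏ i, f i : ℕ) : ℝ) := by
            apply Real.sqrt_le_sqrt
            exact_mod_cast hkey
      _ = (n : ℝ) * Real.sqrt (∏ i, (f i : ℝ)) := by
            push_cast
            rw [Real.sqrt_mul (by positivity), Real.sqrt_sq (by positivity)]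
    have hD : 0 < ∏ i, Real.sqrt (f i) := by
      apply Finset.prod_pos
      intro i _
      apply Real.sqrt_pos.mpr
      have := (hbounds i).1
      positivity
    rw [Finset.prod_div_distrib]
    rw [div_le_iff₀ hD]
    set P : ℝ := ∏ i, ‖t (f i)‖ with hP
    have hPnn : 0 ≤ P := Finset.prod_nonneg fun i _ => norm_nonneg _
    have h5 : P * Q ≤ P * ((n : ℝ) * ∏ i, Real.sqrt (f i)) :=
      mul_le_mul_of_nonneg_left hQle hPnn
    rw [div_mul_eq_mul_div, div_mul_eq_mul_div]
    rw [le_div_iff₀ hQpos]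
    nlinarith [h5]
  -- fc of powers of tpoly
  have hfcT : ∀ n : ℕ, fc (fun θ => tpoly N t θ ^ n / (n ! : ℂ)) (M : ℤ)
      = (n ! : ℂ)⁻¹ * ∑ f ∈ V n, ∏ i, a (f i) := by
    intro n
    have he : (fun θ : ℝ => tpoly N t θ ^ n / (n ! : ℂ)) = fun θ : ℝ =>
        (n ! : ℂ)⁻¹ *
          ((∑ j ∈ Finset.Icc 1 N, a j * Complex.exp (Complex.I * (j:ℂ) * (θ:ℂ))) ^ n) := by
      funext θ; rw [hTsum θ]; ring
    rw [he, fc_const_mul, fc_pow, hV]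
  have hbT : ∀ (n : ℕ) (θ : ℝ), ‖tpoly N t θ ^ n / (n ! : ℂ)‖ ≤ R ^ n / n ! := by
    intro n θ
    rw [norm_div, norm_pow, Complex.norm_natCast]
    gcongr <;> first | exact hTb θ | positivity
  have hLHS : HasSum (fun n => (n ! : ℂ)⁻¹ * ∑ f ∈ V n, ∏ i, a (f i))
      (fc (fun θ => Complex.exp (tpoly N t θ)) (M : ℤ)) := by
    have h := fc_hasSum (fun n θ => tpoly N t θ ^ n / (n ! : ℂ))
      (fun θ => Complex.exp (tpoly N t θ))
      (fun n => (hTcont.pow n).div_const _)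
      (fun n => R ^ n / n !) hbT
      (Real.summable_pow_div_factorial R)
      (fun θ => exp_hasSum (tpoly N t θ)) (M : ℤ)
    simpa only [hfcT] using h
  -- bound on norms of coefficients
  have hnormA : ∀ n : ℕ, ‖(n ! : ℂ)⁻¹ * ∑ f ∈ V n, ∏ i, a (f i)‖ ≤ (n ! : ℝ)⁻¹ * W n := by
    intro n
    rw [norm_mul, norm_inv, Complex.norm_natCast]
    apply mul_le_mul_of_nonneg_left ?_ (by positivity)
    rw [hW]
    refine le_trans (norm_sum_le _ _) (Finset.sum_le_sum fun f hf => ?_)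
    rw [norm_prod]
    apply le_of_eq
    apply Finset.prod_congr rfl
    intro i _
    simp only [ha]
    rw [norm_div, Complex.norm_real, Real.norm_eq_abs,
      _root_.abs_of_nonneg (Real.sqrt_nonneg _)]
  set w : ℕ → ℝ := fun n => (n ! : ℝ)⁻¹ * W n with hw
  have hw0 : ∀ n, 0 ≤ w n := fun n => mul_nonneg (by positivity) (hW0 n)
  have hwle : ∀ n, w n ≤ R ^ n / n ! := by
    intro n
    calc w n ≤ (n ! : ℝ)⁻¹ * R ^ n :=
          mul_le_mul_of_nonneg_left (le_trans (hWS n) (hSR n)) (by positivity)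
    _ = R ^ n / n ! := by rw [div_eq_mul_inv, mul_comm]
  have hwsum : Summable w :=
    Summable.of_nonneg_of_le hw0 hwle (Real.summable_pow_div_factorial R)
  have hnorm_le : ‖fc (fun θ => Complex.exp (tpoly N t θ)) (M : ℤ)‖ ≤ ∑' n, w n := by
    rw [← hLHS.tsum_eq]
    have hns : Summable fun n => ‖(n ! : ℂ)⁻¹ * ∑ f ∈ V n, ∏ i, a (f i)‖ :=
      Summable.of_nonneg_of_le (fun n => norm_nonneg _) hnormA hwsum
    exact le_trans (norm_tsum_le_tsum_norm hns) (Summable.tsum_le_tsum hnormA hns hwsum)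
  -- vanishing of the first two terms
  have hV0 : V 0 = ∅ := by
    rw [hV]
    apply Finset.filter_false_of_mem
    intro f _
    simp only [Finset.univ_eq_empty, Finset.sum_empty, hM]
    omega
  have hV1 : V 1 = ∅ := by
    rw [hV]
    apply Finset.filter_false_of_mem
    intro f hf
    rw [Fintype.mem_piFinset] at hf
    have h0 := hf 0
    rw [Finset.mem_Icc] at h0
    rw [Fin.sum_univ_one, hM]
    omega
  have hwz0 : w 0 = 0 := by simp [hw, hW, hV0]
  have hwz1 : w 1 = 0 := by simp [hw, hW, hV1]
  have hwshift : Summable (fun n => w (n + 1)) := (summable_nat_add_iff 1).mpr hwsum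
  have hwshift2 : Summable (fun n => w (n + 2)) := (summable_nat_add_iff 2).mpr hwsum
  have htsum_w : ∑' n, w n = ∑' n, w (n + 2) := by
    rw [Summable.tsum_eq_zero_add hwsum, hwz0, zero_add, Summable.tsum_eq_zero_add hwshift, hwz1, zero_add]
  -- fc of powers of Fpoly
  have hfcF : ∀ n : ℕ, fc (fun θ => Fpoly N t θ * (Fpoly N t θ ^ (n+1) / ((n+1)! : ℂ))) (M : ℤ)
      = ((((n+1)! : ℝ)⁻¹ * S (n+2) : ℝ) : ℂ) := by
    intro n
    have he : (fun θ : ℝ => Fpoly N t θ * (Fpoly N t θ ^ (n+1) / ((n+1)! : ℂ))) =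
        fun θ : ℝ => ((n+1)! : ℂ)⁻¹ *
          ((∑ j ∈ Finset.Icc 1 N,
            (‖t j‖ : ℂ) * Complex.exp (Complex.I * (j:ℂ) * (θ:ℂ))) ^ (n+2)) := by
      funext θ
      simp only [Fpoly]
      ring
    rw [he, fc_const_mul, fc_pow]
    simp only [hS, hV]
    push_cast
    ring
  have hFhs : ∀ θ, HasSum (fun n : ℕ => Fpoly N t θ * (Fpoly N t θ ^ (n+1) / ((n+1)! : ℂ)))
      (Fpoly N t θ * (Complex.exp (Fpoly N t θ) - 1)) := by
    intro θ
    apply HasSum.mul_left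
    refine (hasSum_nat_add_iff (f := fun n : ℕ => Fpoly N t θ ^ n / (n ! : ℂ)) 1).mpr ?_
    simpa using exp_hasSum (Fpoly N t θ)
  have hbF : ∀ (n : ℕ) (θ : ℝ),
      ‖Fpoly N t θ * (Fpoly N t θ ^ (n+1) / ((n+1)! : ℂ))‖ ≤ R * (R ^ (n+1) / (n+1)!) := by
    intro n θ
    rw [norm_mul, norm_div, norm_pow, Complex.norm_natCast]
    gcongr <;> first | exact hFb θ | positivity
  have hCsum : Summable (fun n : ℕ => R * (R ^ (n+1) / (n+1)!)) :=
    ((summable_nat_add_iff 1).mpr (Real.summable_pow_div_factorial R)).mul_left R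
  have hRHShs : HasSum (fun n => ((((n+1)! : ℝ)⁻¹ * S (n+2) : ℝ) : ℂ))
      (fc (fun θ => Fpoly N t θ * (Complex.exp (Fpoly N t θ) - 1)) (M : ℤ)) := by
    have h := fc_hasSum (fun n θ => Fpoly N t θ * (Fpoly N t θ ^ (n+1) / ((n+1)! : ℂ)))
      (fun θ => Fpoly N t θ * (Complex.exp (Fpoly N t θ) - 1))
      (fun n => hFcont.mul ((hFcont.pow _).div_const _))
      (fun n => R * (R ^ (n+1) / (n+1)!)) hbF hCsum hFhs (M : ℤ)
    simpa only [hfcF] using h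
  have hsummS : Summable (fun n : ℕ => ((n+1)! : ℝ)⁻¹ * S (n+2)) := by
    apply Summable.of_nonneg_of_le (fun n => mul_nonneg (by positivity) (hS0 _)) ?_ hCsum
    intro n
    calc ((n+1)! : ℝ)⁻¹ * S (n+2) ≤ ((n+1)! : ℝ)⁻¹ * R ^ (n+2) :=
          mul_le_mul_of_nonneg_left (hSR (n+2)) (by positivity)
    _ = R * (R ^ (n+1) / (n+1)!) := by rw [div_eq_mul_inv]; ring
  have hre : (fc (fun θ => Fpoly N t θ * (Complex.exp (Fpoly N t θ) - 1)) (M : ℤ)).re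
      = ∑' n, ((n+1)! : ℝ)⁻¹ * S (n+2) := by
    have h2 : HasSum (fun n => ((((n+1)! : ℝ)⁻¹ * S (n+2) : ℝ) : ℂ))
        (((∑' n, ((n+1)! : ℝ)⁻¹ * S (n+2) : ℝ)) : ℂ) :=
      Complex.ofRealCLM.hasSum hsummS.hasSum
    rw [hRHShs.unique h2, Complex.ofReal_re]
  have hterm : ∀ n : ℕ, w (n + 2) ≤ (1 / Q) * (((n+1)! : ℝ)⁻¹ * S (n+2)) := by
    intro n
    have hwn2 : w (n + 2) = ((n+2)! : ℝ)⁻¹ * W (n + 2) := rfl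
    rw [hwn2]
    calc ((n+2)! : ℝ)⁻¹ * W (n+2)
        ≤ ((n+2)! : ℝ)⁻¹ * ((((n+2) : ℕ) : ℝ) / Q * S (n+2)) :=
          mul_le_mul_of_nonneg_left (hWn (n+2)) (by positivity)
    _ = (1 / Q) * (((n+1)! : ℝ)⁻¹ * S (n+2)) := by
        have hfact : ((n+2)! : ℝ) = (((n+2) : ℕ) : ℝ) * ((n+1)! : ℝ) := by
          exact_mod_cast congrArg (Nat.cast : ℕ → ℝ) (Nat.factorial_succ (n+1))
        rw [hfact]
        have h1 : (((n+2) : ℕ) : ℝ) ≠ 0 := by positivity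
        have h2 : ((n+1)! : ℝ) ≠ 0 := by positivity
        have h3 : Q ≠ 0 := ne_of_gt hQpos
        field_simp
  calc ‖fc (fun θ => Complex.exp (tpoly N t θ)) (M : ℤ)‖ ≤ ∑' n, w n := hnorm_le
  _ = ∑' n, w (n + 2) := htsum_w
  _ ≤ ∑' n, (1 / Q) * (((n+1)! : ℝ)⁻¹ * S (n+2)) :=
      Summable.tsum_le_tsum hterm hwshift2 (hsummS.mul_left _)
  _ = (1 / Q) * ∑' n, ((n+1)! : ℝ)⁻¹ * S (n+2) := tsum_mul_left
  _ = (1 / Q) *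
      (fc (fun θ => Fpoly N t θ * (Complex.exp (Fpoly N t θ) - 1)) (M : ℤ)).re := by rw [hre]
end

section
/- For all n ∈ ℕ, |Tr T_n(b − 1) − C⁽²⁾| ≤ n (e^{A₁/√n} − 1)² − A₁². -/
open Filter Complex MeasureTheory Topology
open scoped ComplexOrder

noncomputable def Tmat (n : ℕ) (h : ℝ → ℂ) : Matrix (Fin n) (Fin n) ℂ :=
  Matrix.of fun j l => fc h ((j : ℤ) - (l : ℤ))

noncomputable def g1 (α : ℤ → ℂ) (k : ℕ → ℕ+ → ℕ) (n : ℕ) (θ : ℝ) : ℂ :=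
  ∑' j : ℕ+, if k n j ≤ n then
      (α ((j : ℕ) : ℤ) * Complex.exp (Complex.I * (k n j : ℂ) * (θ : ℂ))
        + α (-((j : ℕ) : ℤ)) * Complex.exp (-Complex.I * (k n j : ℂ) * (θ : ℂ))) /
      (Real.sqrt (k n j) : ℂ)
    else 0

noncomputable def g2 (α : ℤ → ℂ) (k : ℕ → ℕ+ → ℕ) (n : ℕ) (θ : ℝ) : ℂ :=
  ∑' j : ℕ+, if n < k n j then
      (α ((j : ℕ) : ℤ) * Complex.exp (Complex.I * (k n j : ℂ) * (θ : ℂ))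
        + α (-((j : ℕ) : ℤ)) * Complex.exp (-Complex.I * (k n j : ℂ) * (θ : ℂ))) /
      (Real.sqrt n : ℂ)
    else 0

noncomputable def g1p (α : ℤ → ℂ) (k : ℕ → ℕ+ → ℕ) (n : ℕ) (θ : ℝ) : ℂ :=
  ∑' j : ℕ+, if k n j ≤ n then
      α ((j : ℕ) : ℤ) * Complex.exp (Complex.I * (k n j : ℂ) * (θ : ℂ)) / (Real.sqrt (k n j) : ℂ)
    else 0

noncomputable def g1m (α : ℤ → ℂ) (k : ℕ → ℕ+ → ℕ) (n : ℕ) (θ : ℝ) : ℂ :=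
  ∑' j : ℕ+, if k n j ≤ n then
      α (-((j : ℕ) : ℤ)) * Complex.exp (-Complex.I * (k n j : ℂ) * (θ : ℂ)) / (Real.sqrt (k n j) : ℂ)
    else 0

noncomputable def C1 (α : ℤ → ℂ) (k : ℕ → ℕ+ → ℕ) (n : ℕ) : ℂ :=
  ∑' j : ℕ+, if k n j ≤ n then α ((j : ℕ) : ℤ) * α (-((j : ℕ) : ℤ)) else 0

noncomputable def C2 (α : ℤ → ℂ) (k : ℕ → ℕ+ → ℕ) (n : ℕ) : ℂ :=
  ∑' j : ℕ+, if n < k n j then α ((j : ℕ) : ℤ) * α (-((j : ℕ) : ℤ)) else 0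

noncomputable def A1 (α : ℤ → ℂ) : ℝ :=
  ∑' j : ℕ+, (‖α ((j : ℕ) : ℤ)‖ + ‖α (-((j : ℕ) : ℤ))‖)

/-- Finite section `P_n H(c) H(d̃) P_n` of the product of Hankel matrices. -/
noncomputable def Mmat (n : ℕ) (c d : ℝ → ℂ) : Matrix (Fin n) (Fin n) ℂ :=
  Matrix.of fun j l => ∑' kk : ℕ, fc c ((j : ℤ) + kk + 1) * fc d (-((kk : ℤ) + (l : ℤ) + 1))

/-- Finite section `W_n H(c̃) H(d) W_n` of the product of Hankel matrices. -/
noncomputable def Mpmat (n : ℕ) (c d : ℝ → ℂ) : Matrix (Fin n) (Fin n) ℂ :=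
  Matrix.of fun j l => ∑' kk : ℕ, fc c (-((n : ℤ) - (j : ℤ) + kk)) * fc d ((kk : ℤ) + (n : ℤ) - (l : ℤ))

noncomputable def Bmat (α : ℤ → ℂ) (k : ℕ → ℕ+ → ℕ) (n : ℕ) : Matrix (Fin n) (Fin n) ℂ :=
  Tmat n (fun θ => Complex.exp (-(g1 α k n θ)))
    - Mmat n (fun θ => Complex.exp (-(g1p α k n θ))) (fun θ => Complex.exp (-(g1m α k n θ)))
    - Mpmat n (fun θ => Complex.exp (-(g1m α k n θ))) (fun θ => Complex.exp (-(g1p α k n θ)))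

noncomputable def Fmat (α : ℤ → ℂ) (k : ℕ → ℕ+ → ℕ) (n : ℕ) : Matrix (Fin n) (Fin n) ℂ :=
  Mmat n (fun θ => Complex.exp (g1 α k n θ)) (fun θ => Complex.exp (g2 α k n θ))
    + Mpmat n (fun θ => Complex.exp (g1 α k n θ)) (fun θ => Complex.exp (g2 α k n θ))

noncomputable def Emat (α : ℤ → ℂ) (k : ℕ → ℕ+ → ℕ) (n : ℕ) : Matrix (Fin n) (Fin n) ℂ :=
  - Mmat n (fun θ => Complex.exp (-(g1p α k n θ))) (fun θ => Complex.exp (-(g1m α k n θ)))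
    - Mpmat n (fun θ => Complex.exp (-(g1m α k n θ))) (fun θ => Complex.exp (-(g1p α k n θ)))

/-- The positive semidefinite square root (as defined in Mathlib of December 2024). -/
noncomputable def Matrix.PosSemidef.sqrt {𝕜 : Type*} [RCLike 𝕜] {m : Type*} [Fintype m]
    [DecidableEq m] {A : Matrix m m 𝕜} (hA : A.PosSemidef) : Matrix m m 𝕜 :=
  (hA.1.eigenvectorUnitary : Matrix m m 𝕜) *
    Matrix.diagonal (fun i => ((Real.sqrt (hA.1.eigenvalues i) : ℝ) : 𝕜)) *
    (star hA.1.eigenvectorUnitary : Matrix m m 𝕜)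

/-- The trace norm (sum of singular values) of a complex square matrix. -/
noncomputable def traceNorm {n : ℕ} (M : Matrix (Fin n) (Fin n) ℂ) : ℝ :=
  ((Matrix.posSemidef_conjTranspose_mul_self M).sqrt.trace).re

/-- The Frobenius (Hilbert-Schmidt) norm of a complex square matrix. -/
noncomputable def frobNorm {n : ℕ} (M : Matrix (Fin n) (Fin n) ℂ) : ℝ :=
  Real.sqrt (∑ j : Fin n, ∑ l : Fin n, ‖M j l‖ ^ 2)


section aux
open Nat intervalIntegral

lemma lemA (z : ℂ) (x : ℝ) (hz : ‖z‖ ≤ x) :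
    ‖Complex.exp z - 1 - z - z^2/2‖ ≤ Real.exp x - 1 - x - x^2/2 := by
  have hsumz : Summable (fun n : ℕ => z ^ n / (n ! : _)) := NormedSpace.expSeries_div_summable z
  have hsumx : Summable (fun n : ℕ => x ^ n / (n ! : _)) := NormedSpace.expSeries_div_summable x
  have hez : Complex.exp z = ∑' n : ℕ, z ^ n / (n ! : _) := by
    rw [Complex.exp_eq_exp_ℂ, NormedSpace.exp_eq_tsum_div]
  have hex : Real.exp x = ∑' n : ℕ, x ^ n / (n ! : _) := by
    rw [Real.exp_eq_exp_ℝ, NormedSpace.exp_eq_tsum_div]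
  have htz := Summable.sum_add_tsum_nat_add 3 hsumz
  have htx := Summable.sum_add_tsum_nat_add 3 hsumx
  have hz3 : Complex.exp z - 1 - z - z^2/2 = ∑' i : ℕ, z ^ (i + 3) / ((i+3)! : _) := by
    rw [hez, ← htz]
    simp [Finset.sum_range_succ, Nat.factorial]
    ring
  have hx3 : Real.exp x - 1 - x - x^2/2 = ∑' i : ℕ, x ^ (i + 3) / ((i+3)! : _) := by
    rw [hex, ← htx]
    simp [Finset.sum_range_succ, Nat.factorial]
    ring
  rw [hz3, hx3]
  calc ‖∑' i : ℕ, z ^ (i + 3) / ((i+3)! : _)‖ ≤ ∑' i : ℕ, ‖z ^ (i + 3) / ((i+3)! : _)‖ :=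
        norm_tsum_le_tsum_norm ((summable_nat_add_iff 3).2 hsumz).norm
    _ ≤ ∑' i : ℕ, x ^ (i + 3) / ((i+3)! : _) := by
        apply Summable.tsum_le_tsum _ (((summable_nat_add_iff 3).2 hsumz).norm)
          ((summable_nat_add_iff 3).2 hsumx)
        intro i
        rw [norm_div, norm_pow, Complex.norm_natCast]
        gcongr

lemma lemB (x : ℝ) (hx : 0 ≤ x) :
    Real.exp x - 1 - x - x^2/2 ≤ (Real.exp x - 1)^2 - x^2 := by
  have ht : x + 1 ≤ Real.exp x := Real.add_one_le_exp x
  rcases le_or_gt 1 (2*x) with h | h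
  · nlinarith [sq_nonneg (Real.exp x - 1 - x)]
  · have hx1 : |x| ≤ 1 := by rw [_root_.abs_of_nonneg hx]; linarith
    have hb := Real.exp_bound hx1 (n := 3) (by norm_num)
    rw [_root_.abs_of_nonneg hx] at hb
    simp [Finset.sum_range_succ, Nat.factorial] at hb
    rw [abs_le] at hb
    have hs : Real.exp x - 1 - x ≤ x^2/2 + (2/9)*x^3 := by nlinarith [hb.2]
    have hs0 : (0:ℝ) ≤ Real.exp x - 1 - x := by linarith
    nlinarith [sq_nonneg (Real.exp x - 1 - x), mul_nonneg (mul_nonneg hx hx) hx,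
      mul_le_mul_of_nonneg_left hs (by linarith : (0:ℝ) ≤ 1 - 2*x), sq_nonneg x]



noncomputable def ee (m : ℤ) (θ : ℝ) : ℂ := Complex.exp ((m : ℂ) * Complex.I * θ)

lemma ee_cont (m : ℤ) : Continuous (ee m) := by
  unfold ee; fun_prop

lemma ee_norm (m : ℤ) (θ : ℝ) : ‖ee m θ‖ = 1 := by
  unfold ee; rw [Complex.norm_exp]; simp

lemma ee_mul (a b : ℤ) (θ : ℝ) : ee a θ * ee b θ = ee (a + b) θ := by
  unfold ee
  rw [← Complex.exp_add]
  congr 1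
  push_cast
  ring

lemma ee_intable (m : ℤ) : IntervalIntegrable (ee m) volume (-Real.pi) Real.pi :=
  (ee_cont m).intervalIntegrable _ _

lemma int_ee (m : ℤ) :
    (∫ θ in (-Real.pi)..Real.pi, ee m θ) = if m = 0 then (2 * Real.pi : ℂ) else 0 := by
  rcases eq_or_ne m 0 with rfl | hm
  · simp [ee]
    ring
  · rw [if_neg hm]
    have hc : (m : ℂ) * Complex.I ≠ 0 := by
      simp [Complex.I_ne_zero, hm]
    unfold ee
    rw [integral_exp_mul_complex hc]
    have : Complex.exp ((m:ℂ) * Complex.I * (Real.pi:ℂ)) =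
        Complex.exp ((m:ℂ) * Complex.I * ((-Real.pi : ℝ):ℂ)) := by
      rw [show (m:ℂ) * Complex.I * (Real.pi:ℂ)
          = (m:ℂ) * Complex.I * ((-Real.pi : ℝ):ℂ) + (m:ℂ) * (2 * Real.pi * Complex.I) by
        push_cast; ring]
      rw [Complex.exp_add, Complex.exp_int_mul_two_pi_mul_I, mul_one]
    rw [this, sub_self, zero_div]

lemma int_ee_mul (a b : ℤ) :
    (∫ θ in (-Real.pi)..Real.pi, ee a θ * ee b θ)
      = if a + b = 0 then (2 * Real.pi : ℂ) else 0 := by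
  rw [← int_ee (a + b)]
  apply intervalIntegral.integral_congr
  intro θ _
  exact ee_mul a b θ

noncomputable def FF (α : ℤ → ℂ) (k : ℕ → ℕ+ → ℕ) (n : ℕ) (j : ℕ+) (θ : ℝ) : ℂ :=
  if n < k n j then
    (α ((j : ℕ) : ℤ) * ee (k n j) θ + α (-((j : ℕ) : ℤ)) * ee (-(k n j : ℤ)) θ) / (Real.sqrt n : ℂ)
  else 0

noncomputable def cc (α : ℤ → ℂ) (n : ℕ) (j : ℕ+) : ℝ :=
  (‖α ((j : ℕ) : ℤ)‖ + ‖α (-((j : ℕ) : ℤ))‖) / Real.sqrt n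


lemma g2_eq (α : ℤ → ℂ) (k : ℕ → ℕ+ → ℕ) (n : ℕ) (θ : ℝ) :
    g2 α k n θ = ∑' j : ℕ+, FF α k n j θ := by
  unfold g2 FF
  apply tsum_congr
  intro j
  by_cases h : n < k n j
  · rw [if_pos h, if_pos h]
    have e1 : Complex.I * ((k n j : ℕ) : ℂ) * (θ : ℂ) = ((k n j : ℤ) : ℂ) * Complex.I * θ := by
      push_cast; ring
    have e2 : -Complex.I * ((k n j : ℕ) : ℂ) * (θ : ℂ)
        = ((-(k n j : ℤ) : ℤ) : ℂ) * Complex.I * θ := by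
      push_cast; ring
    rw [e1, e2]; rfl
  · rw [if_neg h, if_neg h]

lemma FF_cont (α : ℤ → ℂ) (k : ℕ → ℕ+ → ℕ) (n : ℕ) (j : ℕ+) : Continuous (FF α k n j) := by
  unfold FF ee
  by_cases h : n < k n j <;> simp only [if_pos, if_neg, h, if_true, if_false]
  · fun_prop
  · exact continuous_const

lemma FF_le (α : ℤ → ℂ) (k : ℕ → ℕ+ → ℕ) (n : ℕ) (hn : 0 < n) (j : ℕ+) (θ : ℝ) :
    ‖FF α k n j θ‖ ≤ cc α n j := by
  have hsq : (0:ℝ) < Real.sqrt n := Real.sqrt_pos.2 (by exact_mod_cast hn)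
  unfold FF cc
  by_cases h : n < k n j
  · rw [if_pos h, norm_div, Complex.norm_real, Real.norm_eq_abs,
      _root_.abs_of_nonneg (Real.sqrt_nonneg _)]
    gcongr
    calc ‖α ((j : ℕ) : ℤ) * ee (k n j) θ + α (-((j : ℕ) : ℤ)) * ee (-(k n j : ℤ)) θ‖
          ≤ ‖α ((j : ℕ) : ℤ) * ee (k n j) θ‖ + ‖α (-((j : ℕ) : ℤ)) * ee (-(k n j : ℤ)) θ‖ :=
            norm_add_le _ _
        _ = ‖α ((j : ℕ) : ℤ)‖ + ‖α (-((j : ℕ) : ℤ))‖ := by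
            rw [norm_mul, norm_mul, ee_norm, ee_norm, mul_one, mul_one]
  · rw [if_neg h]
    simp
    positivity

lemma int_FF (α : ℤ → ℂ) (k : ℕ → ℕ+ → ℕ) (n : ℕ) (j : ℕ+) (hk : 0 < k n j) :
    (∫ θ in (-Real.pi)..Real.pi, FF α k n j θ) = 0 := by
  by_cases h : n < k n j
  · simp only [FF, if_pos h]
    rw [intervalIntegral.integral_div,
      intervalIntegral.integral_add ((ee_intable _).const_mul _) ((ee_intable _).const_mul _),
      intervalIntegral.integral_const_mul, intervalIntegral.integral_const_mul,
      int_ee, int_ee]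
    have h1 : ((k n j : ℤ)) ≠ 0 := by exact_mod_cast hk.ne'
    have h2 : (-(k n j : ℤ)) ≠ 0 := neg_ne_zero.2 h1
    rw [if_neg h1, if_neg h2]
    simp
  · simp [FF, if_neg h]

lemma int_FF_mul (α : ℤ → ℂ) (k : ℕ → ℕ+ → ℕ) (n : ℕ) (hn : 0 < n)
    (hinj : Function.Injective (k n)) (hpos : ∀ j, 0 < k n j) (j l : ℕ+) :
    (∫ θ in (-Real.pi)..Real.pi, FF α k n j θ * FF α k n l θ)
      = if l = j then
          (if n < k n j then (4 * Real.pi / (n : ℂ)) * (α ((j:ℕ):ℤ) * α (-((j:ℕ):ℤ))) else 0)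
        else 0 := by
  by_cases hj : n < k n j
  · by_cases hl : n < k n l
    · have hs : ((Real.sqrt n : ℝ) : ℂ) * ((Real.sqrt n : ℝ) : ℂ) = (n : ℂ) := by
        rw [← Complex.ofReal_mul, Real.mul_self_sqrt (Nat.cast_nonneg n)]; norm_cast
      have hKl : ((k n l : ℤ)) ≠ 0 := by exact_mod_cast (hpos l).ne'
      have hKj : ((k n j : ℤ)) ≠ 0 := by exact_mod_cast (hpos j).ne'
      have hsum_ne : (k n j : ℤ) + (k n l : ℤ) ≠ 0 := by positivity
      have expand : ∀ θ ∈ Set.uIcc (-Real.pi) Real.pi, FF α k n j θ * FF α k n l θ =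
          ((α ((j:ℕ):ℤ) * α ((l:ℕ):ℤ)) * (ee (k n j) θ * ee (k n l) θ)
            + (α ((j:ℕ):ℤ) * α (-((l:ℕ):ℤ))) * (ee (k n j) θ * ee (-(k n l:ℤ)) θ)
            + (α (-((j:ℕ):ℤ)) * α ((l:ℕ):ℤ)) * (ee (-(k n j:ℤ)) θ * ee (k n l) θ)
            + (α (-((j:ℕ):ℤ)) * α (-((l:ℕ):ℤ))) * (ee (-(k n j:ℤ)) θ * ee (-(k n l:ℤ)) θ))
            / (((Real.sqrt n : ℝ) : ℂ) * ((Real.sqrt n : ℝ) : ℂ)) := by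
        intro θ _
        simp only [FF, if_pos hj, if_pos hl]
        ring
      rw [intervalIntegral.integral_congr expand]
      have ii : ∀ a b : ℤ, IntervalIntegrable (fun θ => ee a θ * ee b θ) volume
          (-Real.pi) Real.pi := fun a b => ((ee_cont a).mul (ee_cont b)).intervalIntegrable _ _
      rw [intervalIntegral.integral_div,
        intervalIntegral.integral_add
          ((((ii _ _).const_mul _).add ((ii _ _).const_mul _)).add ((ii _ _).const_mul _))
          ((ii _ _).const_mul _),
        intervalIntegral.integral_add
          (((ii _ _).const_mul _).add ((ii _ _).const_mul _)) ((ii _ _).const_mul _),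
        intervalIntegral.integral_add ((ii _ _).const_mul _) ((ii _ _).const_mul _),
        intervalIntegral.integral_const_mul, intervalIntegral.integral_const_mul,
        intervalIntegral.integral_const_mul, intervalIntegral.integral_const_mul,
        int_ee_mul, int_ee_mul, int_ee_mul, int_ee_mul, hs]
      by_cases hjl : l = j
      · subst hjl
        rw [if_pos rfl, if_pos hj]
        have e1 : (k n l : ℤ) + (k n l : ℤ) ≠ 0 := hsum_ne
        have e2 : (k n l : ℤ) + -(k n l : ℤ) = 0 := add_neg_cancel _
        have e3 : -(k n l : ℤ) + (k n l : ℤ) = 0 := neg_add_cancel _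
        have e4 : -(k n l : ℤ) + -(k n l : ℤ) ≠ 0 := by
          intro hc
          exact hsum_ne (by linarith)
        rw [if_neg e1, if_pos e2, if_pos e3, if_neg e4]
        have hn' : (n : ℂ) ≠ 0 := by exact_mod_cast hn.ne'
        field_simp
        ring
      · rw [if_neg hjl]
        have hne : (k n j : ℤ) ≠ (k n l : ℤ) := by
          intro hc
          exact hjl (hinj (by exact_mod_cast hc)).symm
        have e1 : (k n j : ℤ) + (k n l : ℤ) ≠ 0 := hsum_ne
        have e2 : (k n j : ℤ) + -(k n l : ℤ) ≠ 0 := by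
          intro hc; apply hne; linarith
        have e3 : -(k n j : ℤ) + (k n l : ℤ) ≠ 0 := by
          intro hc; apply hne; linarith
        have e4 : -(k n j : ℤ) + -(k n l : ℤ) ≠ 0 := by
          intro hc; apply hsum_ne; linarith
        rw [if_neg e1, if_neg e2, if_neg e3, if_neg e4]
        simp
    · have hFl : ∀ θ, FF α k n l θ = 0 := fun θ => by simp [FF, if_neg hl]
      have : ∀ θ ∈ Set.uIcc (-Real.pi) Real.pi, FF α k n j θ * FF α k n l θ = 0 := by
        intro θ _; rw [hFl, mul_zero]
      rw [intervalIntegral.integral_congr this, intervalIntegral.integral_zero]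
      by_cases hjl : l = j
      · subst hjl; exact absurd hj hl
      · rw [if_neg hjl]
  · have hFj : ∀ θ, FF α k n j θ = 0 := fun θ => by simp [FF, if_neg hj]
    have : ∀ θ ∈ Set.uIcc (-Real.pi) Real.pi, FF α k n j θ * FF α k n l θ = 0 := by
      intro θ _; rw [hFj, zero_mul]
    rw [intervalIntegral.integral_congr this, intervalIntegral.integral_zero]
    rw [if_neg hj]
    simp

variable {α : ℤ → ℂ} {k : ℕ → ℕ+ → ℕ} {n : ℕ}

lemma cc_nonneg (α : ℤ → ℂ) (n : ℕ) (j : ℕ+) : 0 ≤ cc α n j := by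
  unfold cc; positivity

lemma hsumc (α : ℤ → ℂ) (n : ℕ)
    (hsum : Summable (fun j : ℕ+ => ‖α ((j : ℕ) : ℤ)‖ + ‖α (-((j : ℕ) : ℤ))‖)) :
    Summable (cc α n) := hsum.div_const _

lemma hsumF (α : ℤ → ℂ) (k : ℕ → ℕ+ → ℕ) (n : ℕ) (hn : 0 < n)
    (hsum : Summable (fun j : ℕ+ => ‖α ((j : ℕ) : ℤ)‖ + ‖α (-((j : ℕ) : ℤ))‖)) (θ : ℝ) :
    Summable (fun j => FF α k n j θ) :=
  (hsumc α n hsum).of_norm_bounded (fun j => FF_le α k n hn j θ)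

lemma hhs (α : ℤ → ℂ) (k : ℕ → ℕ+ → ℕ) (n : ℕ) (hn : 0 < n)
    (hsum : Summable (fun j : ℕ+ => ‖α ((j : ℕ) : ℤ)‖ + ‖α (-((j : ℕ) : ℤ))‖)) (θ : ℝ) :
    HasSum (fun j => FF α k n j θ) (g2 α k n θ) := by
  rw [g2_eq]; exact (hsumF α k n hn hsum θ).hasSum

lemma hgcont (α : ℤ → ℂ) (k : ℕ → ℕ+ → ℕ) (n : ℕ) (hn : 0 < n)
    (hsum : Summable (fun j : ℕ+ => ‖α ((j : ℕ) : ℤ)‖ + ‖α (-((j : ℕ) : ℤ))‖)) :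
    Continuous (g2 α k n) := by
  rw [show g2 α k n = fun θ => ∑' j : ℕ+, FF α k n j θ from funext (g2_eq α k n)]
  exact continuous_tsum (FF_cont α k n) (hsumc α n hsum) (fun j θ => FF_le α k n hn j θ)

lemma hgle (α : ℤ → ℂ) (k : ℕ → ℕ+ → ℕ) (n : ℕ) (hn : 0 < n)
    (hsum : Summable (fun j : ℕ+ => ‖α ((j : ℕ) : ℤ)‖ + ‖α (-((j : ℕ) : ℤ))‖)) (θ : ℝ) :
    ‖g2 α k n θ‖ ≤ A1 α / Real.sqrt n := by
  rw [g2_eq]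
  calc ‖∑' j : ℕ+, FF α k n j θ‖ ≤ ∑' j : ℕ+, ‖FF α k n j θ‖ :=
        norm_tsum_le_tsum_norm ((hsumF α k n hn hsum θ).norm)
    _ ≤ ∑' j : ℕ+, cc α n j :=
        Summable.tsum_le_tsum (fun j => FF_le α k n hn j θ) (hsumF α k n hn hsum θ).norm
          (hsumc α n hsum)
    _ = A1 α / Real.sqrt n := by
        unfold cc A1
        exact tsum_div_const

lemma int_g2 (α : ℤ → ℂ) (k : ℕ → ℕ+ → ℕ) (n : ℕ) (hn : 0 < n) (hp : ∀ j, 0 < k n j)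
    (hsum : Summable (fun j : ℕ+ => ‖α ((j : ℕ) : ℤ)‖ + ‖α (-((j : ℕ) : ℤ))‖)) :
    (∫ θ in (-Real.pi)..Real.pi, g2 α k n θ) = 0 := by
  have h1 : HasSum (fun j : ℕ+ => ∫ θ in (-Real.pi)..Real.pi, FF α k n j θ)
      (∫ θ in (-Real.pi)..Real.pi, g2 α k n θ) :=
    intervalIntegral.hasSum_integral_of_dominated_convergence
      (bound := fun j _ => cc α n j)
      (fun j => (FF_cont α k n j).aestronglyMeasurable)
      (fun j => Eventually.of_forall fun t _ => FF_le α k n hn j t)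
      (Eventually.of_forall fun t _ => hsumc α n hsum)
      intervalIntegrable_const
      (Eventually.of_forall fun t _ => hhs α k n hn hsum t)
  rw [show (fun j : ℕ+ => ∫ θ in (-Real.pi)..Real.pi, FF α k n j θ) = fun _ => (0:ℂ) from
    funext fun j => int_FF α k n j (hp j)] at h1
  exact (hasSum_zero.unique h1).symm

lemma int_FF_g2 (α : ℤ → ℂ) (k : ℕ → ℕ+ → ℕ) (n : ℕ) (hn : 0 < n)
    (hinj : Function.Injective (k n)) (hp : ∀ j, 0 < k n j)
    (hsum : Summable (fun j : ℕ+ => ‖α ((j : ℕ) : ℤ)‖ + ‖α (-((j : ℕ) : ℤ))‖)) (j : ℕ+) :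
    (∫ θ in (-Real.pi)..Real.pi, FF α k n j θ * g2 α k n θ)
      = if n < k n j then (4 * Real.pi / (n : ℂ)) * (α ((j:ℕ):ℤ) * α (-((j:ℕ):ℤ))) else 0 := by
  have h1 : HasSum (fun l : ℕ+ => ∫ θ in (-Real.pi)..Real.pi, FF α k n j θ * FF α k n l θ)
      (∫ θ in (-Real.pi)..Real.pi, FF α k n j θ * g2 α k n θ) :=
    intervalIntegral.hasSum_integral_of_dominated_convergence
      (bound := fun l _ => cc α n j * cc α n l)
      (fun l => ((FF_cont α k n j).mul (FF_cont α k n l)).aestronglyMeasurable)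
      (fun l => Eventually.of_forall fun t _ => by
        rw [norm_mul]
        exact mul_le_mul (FF_le α k n hn j t) (FF_le α k n hn l t) (norm_nonneg _)
          (cc_nonneg α n j))
      (Eventually.of_forall fun t _ => (hsumc α n hsum).mul_left _)
      intervalIntegrable_const
      (Eventually.of_forall fun t _ => (hhs α k n hn hsum t).mul_left _)
  rw [show (fun l : ℕ+ => ∫ θ in (-Real.pi)..Real.pi, FF α k n j θ * FF α k n l θ)
      = fun l : ℕ+ => if l = j then
          (if n < k n j then (4 * Real.pi / (n : ℂ)) * (α ((j:ℕ):ℤ) * α (-((j:ℕ):ℤ))) else 0)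
        else 0 from
    funext fun l => int_FF_mul α k n hn hinj hp j l] at h1
  exact ((hasSum_ite_eq j _).unique h1).symm

lemma int_g2_sq (α : ℤ → ℂ) (k : ℕ → ℕ+ → ℕ) (n : ℕ) (hn : 0 < n)
    (hinj : Function.Injective (k n)) (hp : ∀ j, 0 < k n j)
    (hsum : Summable (fun j : ℕ+ => ‖α ((j : ℕ) : ℤ)‖ + ‖α (-((j : ℕ) : ℤ))‖)) :
    (∫ θ in (-Real.pi)..Real.pi, g2 α k n θ * g2 α k n θ)
      = (4 * Real.pi / (n : ℂ)) * C2 α k n := by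
  have h1 : HasSum (fun j : ℕ+ => ∫ θ in (-Real.pi)..Real.pi, FF α k n j θ * g2 α k n θ)
      (∫ θ in (-Real.pi)..Real.pi, g2 α k n θ * g2 α k n θ) :=
    intervalIntegral.hasSum_integral_of_dominated_convergence
      (bound := fun j _ => cc α n j * (A1 α / Real.sqrt n))
      (fun j => ((FF_cont α k n j).mul (hgcont α k n hn hsum)).aestronglyMeasurable)
      (fun j => Eventually.of_forall fun t _ => by
        rw [norm_mul]
        exact mul_le_mul (FF_le α k n hn j t) (hgle α k n hn hsum t) (norm_nonneg _)
          (cc_nonneg α n j))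
      (Eventually.of_forall fun t _ => (hsumc α n hsum).mul_right _)
      intervalIntegrable_const
      (Eventually.of_forall fun t _ => (hhs α k n hn hsum t).mul_right _)
  rw [show (fun j : ℕ+ => ∫ θ in (-Real.pi)..Real.pi, FF α k n j θ * g2 α k n θ)
      = fun j : ℕ+ => (4 * Real.pi / (n : ℂ))
          * (if n < k n j then α ((j:ℕ):ℤ) * α (-((j:ℕ):ℤ)) else 0) from
    funext fun j => by
      rw [int_FF_g2 α k n hn hinj hp hsum j, mul_ite, mul_zero]] at h1
  rw [← h1.tsum_eq, tsum_mul_left]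
  rfl


end aux

theorem stmt9 (α : ℤ → ℂ) (k : ℕ → ℕ+ → ℕ)
    (hpos : ∀ n j, 0 < k n j) (hinj : ∀ n, Function.Injective (k n))
    (hsum : Summable (fun j : ℕ+ => ‖α ((j : ℕ) : ℤ)‖ + ‖α (-((j : ℕ) : ℤ))‖)) :
    ∀ n : ℕ, 0 < n →
      ‖(Tmat n (fun θ => Complex.exp (g2 α k n θ) - 1)).trace - C2 α k n‖ ≤
        n * (Real.exp (A1 α / Real.sqrt n) - 1) ^ 2 - (A1 α) ^ 2 := by
  intro n hn
  have hg : Continuous (g2 α k n) := hgcont α k n hn hsum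
  set b : ℝ → ℂ := fun θ => Complex.exp (g2 α k n θ) - 1 with hb
  set x : ℝ := A1 α / Real.sqrt n with hxdef
  have hA1 : 0 ≤ A1 α := tsum_nonneg (fun j => add_nonneg (norm_nonneg _) (norm_nonneg _))
  have hx0 : 0 ≤ x := div_nonneg hA1 (Real.sqrt_nonneg _)
  set r : ℝ := Real.exp x - 1 - x - x^2/2 with hrdef
  set R : ℝ → ℂ := fun θ => Complex.exp (g2 α k n θ) - 1 - g2 α k n θ
      - (g2 α k n θ * g2 α k n θ)/2 with hRdef
  have hRc : Continuous R :=
    (((Complex.continuous_exp.comp hg).sub continuous_const).sub hg).sub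
      ((hg.mul hg).div_const 2)
  have hRle : ∀ θ, ‖R θ‖ ≤ r := by
    intro θ
    have := lemA (g2 α k n θ) x (hgle α k n hn hsum θ)
    rw [pow_two] at this
    exact this
  have hπ : (Real.pi : ℂ) ≠ 0 := by
    exact_mod_cast Real.pi_ne_zero
  have hnC : (n : ℂ) ≠ 0 := by exact_mod_cast hn.ne'
  have hnR : (n : ℝ) ≠ 0 := by exact_mod_cast hn.ne'
  -- trace = n * fc b 0
  have htrace : (Tmat n b).trace = (n : ℂ) * fc b 0 := by
    unfold Matrix.trace Tmat
    simp only [Matrix.diag, Matrix.of_apply, sub_self]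
    rw [Finset.sum_const, Finset.card_univ, Fintype.card_fin, nsmul_eq_mul]
  -- fc b 0
  have hfc : fc b 0 = (1 / (2 * (Real.pi:ℂ))) * ∫ θ in (-Real.pi)..Real.pi, b θ := by
    unfold fc
    congr 1
    apply intervalIntegral.integral_congr
    intro θ _
    simp
  -- split the integral
  have hsplit : (∫ θ in (-Real.pi)..Real.pi, b θ)
      = (∫ θ in (-Real.pi)..Real.pi, g2 α k n θ)
        + (∫ θ in (-Real.pi)..Real.pi, g2 α k n θ * g2 α k n θ)/2
        + ∫ θ in (-Real.pi)..Real.pi, R θ := by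
    have heq : ∀ θ ∈ Set.uIcc (-Real.pi) Real.pi,
        b θ = g2 α k n θ + (g2 α k n θ * g2 α k n θ)/2 + R θ := by
      intro θ _
      simp only [hb, hRdef]
      ring
    rw [intervalIntegral.integral_congr heq,
      intervalIntegral.integral_add (f := fun θ => g2 α k n θ + g2 α k n θ * g2 α k n θ / 2) (g := R)
        ((hg.intervalIntegrable _ _).add (((hg.mul hg).div_const 2).intervalIntegrable _ _))
        (hRc.intervalIntegrable _ _),
      intervalIntegral.integral_add (f := g2 α k n) (g := fun θ => g2 α k n θ * g2 α k n θ / 2)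
        (hg.intervalIntegrable _ _)
        (((hg.mul hg).div_const 2).intervalIntegrable _ _),
      intervalIntegral.integral_div]
  rw [int_g2 α k n hn (hpos n) hsum, int_g2_sq α k n hn (hinj n) (hpos n) hsum] at hsplit
  -- key identity
  have key : (Tmat n b).trace - C2 α k n
      = ((n:ℂ)/(2*(Real.pi:ℂ))) * ∫ θ in (-Real.pi)..Real.pi, R θ := by
    rw [htrace, hfc, hsplit]
    field_simp
    ring
  rw [key]
  -- norm bound
  have hbnd : ‖∫ θ in (-Real.pi)..Real.pi, R θ‖ ≤ r * (2 * Real.pi) := by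
    have h2 : |Real.pi - (-Real.pi)| = 2 * Real.pi := by
      rw [sub_neg_eq_add, abs_of_pos (by positivity)]
      ring
    have := intervalIntegral.norm_integral_le_of_norm_le_const
      (C := r) (f := R) (a := -Real.pi) (b := Real.pi)
      (fun θ _ => hRle θ)
    rwa [h2] at this
  have hnorm : ‖((n:ℂ)/(2*(Real.pi:ℂ))) * ∫ θ in (-Real.pi)..Real.pi, R θ‖
      = ((n:ℝ)/(2*Real.pi)) * ‖∫ θ in (-Real.pi)..Real.pi, R θ‖ := by
    rw [norm_mul, norm_div]
    congr 2
    · simp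
    · rw [norm_mul]
      simp [abs_of_pos Real.pi_pos]
  rw [hnorm]
  have step1 : ((n:ℝ)/(2*Real.pi)) * ‖∫ θ in (-Real.pi)..Real.pi, R θ‖
      ≤ ((n:ℝ)/(2*Real.pi)) * (r * (2*Real.pi)) := by
    apply mul_le_mul_of_nonneg_left hbnd
    positivity
  have step2 : ((n:ℝ)/(2*Real.pi)) * (r * (2*Real.pi)) = (n:ℝ) * r := by
    field_simp
  have step3 : (n:ℝ) * r ≤ (n:ℝ) * ((Real.exp x - 1)^2 - x^2) :=
    mul_le_mul_of_nonneg_left (lemB x hx0) (Nat.cast_nonneg n)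
  have hx2 : (n:ℝ) * x^2 = (A1 α)^2 := by
    rw [hxdef, div_pow, Real.sq_sqrt (Nat.cast_nonneg n)]
    field_simp
  have step4 : (n:ℝ) * ((Real.exp x - 1)^2 - x^2)
      = n * (Real.exp x - 1)^2 - (A1 α)^2 := by
    rw [mul_sub, hx2]
  calc ((n:ℝ)/(2*Real.pi)) * ‖∫ θ in (-Real.pi)..Real.pi, R θ‖
      ≤ ((n:ℝ)/(2*Real.pi)) * (r * (2*Real.pi)) := step1
    _ = (n:ℝ) * r := step2
    _ ≤ (n:ℝ) * ((Real.exp x - 1)^2 - x^2) := step3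
    _ = n * (Real.exp x - 1)^2 - (A1 α)^2 := step4
end
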